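/- Let q be prime, m ∈ ℕ with m ≥ 2. For tuples (k_1,...,k_s) of nonzero polynomials over F_q with gcd 1 and degrees r_1,...,r_s summing to m, and polynomials β_1,...,β_s (not all zero, each zero or coprime to the corresponding k_j), the Haar measure of the set of (f_1,...,f_s) ∈ Z̄^s satisfying both ν({k_1 f_1 + ⋯ + k_s f_s}) ≤ −m and ν({(k_1+β_1) f_1 + ⋯ + (k_s+β_s) f_s}) ≤ −⌊m/2⌋ equals q^{−(m−1)} · q^{−(⌊m/2⌋−1)}, i.e., the two events are independent, provided (k_1,...,k_s) ≠ (1,...,1). -/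

import Mathlib

/-! The conditions only involve the first `N` digits of each `f i` (for `N` large), and the
digit vector of a Lebesgue-random point of `[0,1)^s` is uniform on `(F_q^N)^s`. The two
conditions say that this vector lies in the kernel of a linear map
`Φ : (F_q^N)^s → F_q^(m-1) × F_q^(⌊m/2⌋-1)`, so the measure is `1 / q^(m-1+⌊m/2⌋-1)` as soon
as `Φ` is onto. A functional vanishing on the range of `Φ` is a pair of polynomials `(A, B)` of
small degree with `A k_l + B (k_l + β_l) = 0` for every `l`. Writing `1 = ∑ u_l k_l` (Bezout)
gives `A + B = -B w` with `w = ∑ u_l β_l`, hence `β_l = w k_l` when `B ≠ 0`; a `k_l` of positive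
degree is then not coprime to `β_l`, so `β_l = 0`, `w = 0` and all `β_l` vanish, which is
excluded. So `B = 0`, and then `A = 0` too. -/

open MeasureTheory Finset

/-- The `(n+1)`-st digit `ξ_{n+1} ∈ Z_q` of the `q`-adic expansion of a real number
`x ∈ [0,1)`; via `x ↔ ∑_k ξ_k x^{-k}` this identifies `x` with an element of the
set `Z̄ ⊆ F_q((x^{-1}))` of Laurent series with zero polynomial part, in such a way
that the normalized Haar measure on `Z̄` corresponds to Lebesgue measure on `[0,1)`. -/
noncomputable def qDigit (q : ℕ) (x : ℝ) (n : ℕ) : ZMod q :=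
  ((⌊x * (q : ℝ) ^ (n + 1)⌋ : ℤ) : ZMod q)

/-- The coefficient of `x^{-(m+1)}` of the product `k(x)·f(x)` in `F_q((x^{-1}))`,
where the Laurent series `f = ∑_{j≥0} f_j x^{-(j+1)}` is given by its coefficient
sequence.  In particular `ν({k·f}) ≤ -M` iff `fracCoeff q k f n = 0` for all `n`
with `n + 2 ≤ M`. -/
def fracCoeff (q : ℕ) (k : Polynomial (ZMod q)) (f : ℕ → ZMod q) (m : ℕ) : ZMod q :=
  ∑ j ∈ Finset.range (k.natDegree + 1), k.coeff j * f (m + j)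

/-- The (monic) gcd of the tuple `k` is `1`: every common divisor is a unit. -/
def GcdOne {q s : ℕ} (k : Fin s → Polynomial (ZMod q)) : Prop :=
  ∀ d : Polynomial (ZMod q), (∀ i, d ∣ k i) → IsUnit d

open Polynomial

variable {q : ℕ}

noncomputable def qDigits (q N : ℕ) (x : ℝ) : Fin N → ZMod q := fun n => qDigit q x n

theorem qDigit_eq_natFloor_div [NeZero q] {x : ℝ} (hx : 0 ≤ x) {N n : ℕ} (hn : n < N) :
    qDigit q x n = ((⌊x * q ^ N⌋₊ / q ^ (N - 1 - n) : ℕ) : ZMod q) := by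
  have hpow : x * q ^ (n + 1) = x * q ^ N / ((q ^ (N - 1 - n) : ℕ) : ℝ) := by
    rw [eq_div_iff (by have := NeZero.pos q; positivity), Nat.cast_pow, mul_assoc, ← pow_add]
    congr 2
    omega
  rw [qDigit, ← Int.natCast_floor_eq_floor (by positivity), hpow, Nat.floor_div_natCast]
  norm_cast

/-- The integer with base-`q` digits `d 0, d 1, …, d (N - 1)`, most significant first. -/
def digitsToFin [NeZero q] {N : ℕ} (d : Fin N → ZMod q) : Fin (q ^ N) :=
  finFunctionFinEquiv fun i => ⟨(d i.rev).val, ZMod.val_lt _⟩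

theorem digitsToFin_eq_iff [NeZero q] {N : ℕ} (d : Fin N → ZMod q) (c : Fin (q ^ N)) :
    digitsToFin d = c ↔ ∀ n : Fin N, ((c / q ^ (N - 1 - n) : ℕ) : ZMod q) = d n := by
  rw [digitsToFin, ← Equiv.eq_symm_apply, funext_iff, ← Fin.revPerm.forall_congr_right]
  refine forall_congr' fun n => ?_
  rw [Fin.ext_iff, finFunctionFinEquiv_symm_apply_val, ← (ZMod.val_injective q).eq_iff,
    ZMod.val_natCast]
  simp only [Fin.revPerm_apply, Fin.rev_rev, Fin.val_rev, Nat.sub_sub, add_comm 1, eq_comm]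

theorem qDigits_eq_iff [NeZero q] {N : ℕ} {x : ℝ} (hx : x ∈ Set.Ico (0 : ℝ) 1)
    (d : Fin N → ZMod q) : qDigits q N x = d ↔ ⌊x * q ^ N⌋₊ = digitsToFin d := by
  have hlt : ⌊x * q ^ N⌋₊ < q ^ N := by
    rw [Nat.floor_lt (by have := hx.1; positivity)]
    push_cast
    exact mul_lt_of_lt_one_left (by have := NeZero.pos q; positivity) hx.2
  rw [← Fin.val_mk hlt, Fin.val_inj, eq_comm (b := digitsToFin d), digitsToFin_eq_iff, funext_iff]
  simp only [qDigits, qDigit_eq_natFloor_div hx.1 (Fin.is_lt _)]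

theorem setOf_mem_Ico_natFloor_mul_eq {Q : ℝ} (hQ : 0 < Q) {c : ℕ} (hc : c + 1 ≤ Q) :
    {x : ℝ | x ∈ Set.Ico 0 1 ∧ ⌊x * Q⌋₊ = c} = Set.Ico (c / Q) ((c + 1) / Q) := by
  ext x
  simp only [Set.mem_ofPred_eq, Set.mem_Ico, div_le_iff₀ hQ, lt_div_iff₀ hQ]
  constructor
  · rintro ⟨⟨hx0, -⟩, hfl⟩
    rw [← hfl]
    exact ⟨Nat.floor_le (by positivity), Nat.lt_floor_add_one _⟩
  · rintro ⟨hlo, hhi⟩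
    have hx0 : 0 ≤ x := nonneg_of_mul_nonneg_left (le_trans c.cast_nonneg hlo) hQ
    refine ⟨⟨hx0, ?_⟩, (Nat.floor_eq_iff (by positivity)).2 ⟨hlo, hhi⟩⟩
    nlinarith

theorem setOf_qDigits_eq_Ico [NeZero q] {N : ℕ} (d : Fin N → ZMod q) :
    {x : ℝ | x ∈ Set.Ico 0 1 ∧ qDigits q N x = d} =
      Set.Ico ((digitsToFin d : ℕ) / (q : ℝ) ^ N) (((digitsToFin d : ℕ) + 1) / (q : ℝ) ^ N) := by
  have hQ : (0 : ℝ) < q ^ N := by have := NeZero.pos q; positivity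
  have hc : ((digitsToFin d : ℕ) : ℝ) + 1 ≤ q ^ N := by exact_mod_cast (digitsToFin d).is_lt
  rw [← setOf_mem_Ico_natFloor_mul_eq hQ hc]
  exact Set.ext fun x => and_congr_right fun hx => qDigits_eq_iff hx d

theorem volume_setOf_qDigits [NeZero q] {N : ℕ} (d : Fin N → ZMod q) :
    volume {x : ℝ | x ∈ Set.Ico 0 1 ∧ qDigits q N x = d} = ((q : ENNReal) ^ N)⁻¹ := by
  have hQ : (0 : ℝ) < q ^ N := by have := NeZero.pos q; positivity
  rw [setOf_qDigits_eq_Ico, Real.volume_Ico, ← sub_div, add_sub_cancel_left, one_div,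
    ENNReal.ofReal_inv_of_pos hQ, ← ENNReal.ofReal_natCast, ← ENNReal.ofReal_pow (by positivity)]

theorem volume_setOf_pi_qDigits [NeZero q] {s N : ℕ} (P : (Fin s → Fin N → ZMod q) → Prop)
    [DecidablePred P] :
    volume {f : Fin s → ℝ | (∀ i, f i ∈ Set.Ico 0 1) ∧ P (fun i => qDigits q N (f i))} =
      #{d | P d} * (((q : ENNReal) ^ N)⁻¹) ^ s := by
  let cylinder (d : Fin s → Fin N → ZMod q) : Set (Fin s → ℝ) :=
    Set.univ.pi fun i => {x | x ∈ Set.Ico 0 1 ∧ qDigits q N x = d i}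
  have hunion : {f : Fin s → ℝ | (∀ i, f i ∈ Set.Ico 0 1) ∧ P (fun i => qDigits q N (f i))} =
      ⋃ d ∈ ({d | P d} : Finset _), cylinder d := by
    ext f
    simp [cylinder, forall_and, ← funext_iff]
  have hvolume (d : Fin s → Fin N → ZMod q) :
      volume (cylinder d) = (((q : ENNReal) ^ N)⁻¹) ^ s := by
    simp only [cylinder, volume_pi_pi, volume_setOf_qDigits, prod_const, card_univ,
      Fintype.card_fin]
  rw [hunion, measure_biUnion_finset]
  · simp only [hvolume, sum_const, nsmul_eq_mul]
  · intro d _ d' _ hne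
    exact Set.disjoint_left.2 fun f hf hf' =>
      hne <| funext fun i => (hf i trivial).2.symm.trans (hf' i trivial).2
  · intro d _
    refine MeasurableSet.univ_pi fun i => ?_
    rw [setOf_qDigits_eq_Ico]
    exact measurableSet_Ico

theorem LinearMap.card_filter_eq_zero_mul_card {R V W : Type*} [Ring R] [AddCommGroup V]
    [Module R V] [AddCommGroup W] [Module R W] [Fintype V] [DecidableEq W] {f : V →ₗ[R] W}
    (hf : Function.Surjective f) : #{v | f v = 0} * Nat.card W = Nat.card V := by
  have hker : Nat.card (LinearMap.ker f) = #{v | f v = 0} := by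
    rw [← Fintype.card_subtype, ← Nat.card_eq_fintype_card]
    rfl
  rw [Submodule.card_eq_card_quotient_mul_card (LinearMap.ker f),
    Nat.card_congr (f.quotKerEquivOfSurjective hf).toEquiv, hker]

theorem volume_setOf_apply_qDigits_eq_zero [NeZero q] {s N : ℕ} {W : Type*} [AddCommGroup W]
    [Module (ZMod q) W] {Φ : (Fin s → Fin N → ZMod q) →ₗ[ZMod q] W}
    (hΦ : Function.Surjective Φ) :
    volume {f : Fin s → ℝ | (∀ i, f i ∈ Set.Ico 0 1) ∧ Φ (fun i => qDigits q N (f i)) = 0} =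
      (Nat.card W : ENNReal)⁻¹ := by
  classical
  have hcard := LinearMap.card_filter_eq_zero_mul_card hΦ
  simp only [Nat.card_fun, Nat.card_zmod, Nat.card_fin] at hcard
  have hker : (#{v | Φ v = 0} : ENNReal) ≠ 0 := fun h => by
    rw [Nat.cast_eq_zero.1 h, zero_mul] at hcard
    exact pow_ne_zero _ (pow_ne_zero _ (NeZero.ne q)) hcard.symm
  have hcard' : ((q : ENNReal) ^ N) ^ s = #{v | Φ v = 0} * Nat.card W := by
    exact_mod_cast hcard.symm
  rw [volume_setOf_pi_qDigits (fun v => Φ v = 0), ← ENNReal.inv_pow, hcard',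
    ENNReal.mul_inv (.inl hker) (.inl (by simp)), ← mul_assoc,
    ENNReal.mul_inv_cancel hker (by simp), one_mul]

theorem fracCoeff_congr {p : (ZMod q)[X]} {f g : ℕ → ZMod q} {n : ℕ}
    (h : ∀ j ≤ p.natDegree, f (n + j) = g (n + j)) : fracCoeff q p f n = fracCoeff q p g n :=
  sum_congr rfl fun j hj => by rw [h j (Nat.lt_succ_iff.1 (mem_range.1 hj))]

theorem fracCoeff_single (p : (ZMod q)[X]) (t n : ℕ) :
    fracCoeff q p (Pi.single t 1) n = if n ≤ t then p.coeff (t - n) else 0 := by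
  have key (j : ℕ) : n + j = t ↔ n ≤ t ∧ j = t - n := by omega
  simp only [fracCoeff, Pi.single_apply, key, mul_ite, mul_one, mul_zero, ite_and]
  split_ifs with h
  · rw [sum_ite_eq']
    split_ifs with h'
    · rfl
    · rw [coeff_eq_zero_of_natDegree_lt (by simp at h'; omega)]
  · simp

theorem Function.Injective.extend_single {α β M : Type*} [DecidableEq α] [DecidableEq β]
    [Zero M] {f : α → β} (hf : Function.Injective f) (a : α) (x : M) :
    Function.extend f (Pi.single a x) 0 = Pi.single (f a) x := by
  funext b
  by_cases hb : ∃ a', f a' = b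
  · obtain ⟨a', rfl⟩ := hb
    simp only [hf.extend_apply, Pi.single_apply, hf.eq_iff]
  · rw [Function.extend_apply' _ _ _ hb, Pi.single_eq_of_ne fun h => hb ⟨a, h.symm⟩]
    rfl

/-- The coefficients of `x^{-1}, …, x^{-L}` in `∑ᵢ pᵢ fᵢ`, as a linear function of the first
`N` digits of the `fᵢ ∈ Z̄` (the later digits are set to zero). -/
noncomputable def fracCoeffMap {s : ℕ} (p : Fin s → (ZMod q)[X]) (N L : ℕ) :
    (Fin s → Fin N → ZMod q) →ₗ[ZMod q] Fin L → ZMod q where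
  toFun v n := ∑ i, fracCoeff q (p i) (Function.ExtendByZero.linearMap (ZMod q) Fin.val (v i)) n
  map_add' v w := by
    ext n
    simp only [Pi.add_apply, map_add, fracCoeff, mul_add, sum_add_distrib]
  map_smul' c v := by
    ext n
    simp only [Pi.smul_apply, map_smul, fracCoeff, smul_eq_mul, mul_sum, mul_left_comm,
      RingHom.id_apply]

section FracCoeffMap

variable {s N L : ℕ}

theorem fracCoeffMap_apply (p : Fin s → (ZMod q)[X]) (v : Fin s → Fin N → ZMod q) (n : Fin L) :
    fracCoeffMap p N L v n = ∑ i, fracCoeff q (p i) (Function.extend Fin.val (v i) 0) n :=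
  rfl

theorem fracCoeffMap_apply_restrict {p : Fin s → (ZMod q)[X]} (g : Fin s → ℕ → ZMod q)
    (n : Fin L) (hN : ∀ i, n + (p i).natDegree < N) :
    fracCoeffMap p N L (fun i (t : Fin N) => g i t) n = ∑ i, fracCoeff q (p i) (g i) n := by
  rw [fracCoeffMap_apply]
  refine sum_congr rfl fun i _ => fracCoeff_congr fun j hj => ?_
  have := hN i
  exact Fin.val_injective.extend_apply (fun t : Fin N => g i t) 0 ⟨n + j, by omega⟩

theorem fracCoeffMap_restrict_eq_zero_iff {p : Fin s → (ZMod q)[X]} (g : Fin s → ℕ → ZMod q)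
    (hN : ∀ i, L + (p i).natDegree ≤ N) :
    fracCoeffMap p N L (fun i (t : Fin N) => g i t) = 0 ↔
      ∀ n < L, ∑ i, fracCoeff q (p i) (g i) n = 0 := by
  rw [funext_iff, Fin.forall_iff]
  refine forall₂_congr fun n hn => ?_
  exact Eq.congr_left (fracCoeffMap_apply_restrict g ⟨n, hn⟩ fun i => by
    have := hN i; simp only; omega)

theorem fracCoeffMap_single (p : Fin s → (ZMod q)[X]) (i : Fin s) (t : Fin N) :
    fracCoeffMap p N L (Pi.single i (Pi.single t 1)) =
      fun n : Fin L => if (n : ℕ) ≤ t then (p i).coeff (t - n) else 0 := by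
  ext n
  rw [fracCoeffMap_apply,
    Fintype.sum_eq_single i fun i' hi' => by simp [hi', fracCoeff, Function.extend_zero],
    Pi.single_eq_same, Fin.val_injective.extend_single, fracCoeff_single]

end FracCoeffMap

section DualPoly

variable {R : Type*} [CommRing R] {L : ℕ}

noncomputable def dualPoly (ψ : (Fin L → R) →ₗ[R] R) : R[X] :=
  ∑ n : Fin L, C (ψ (Pi.single n 1)) * X ^ (n : ℕ)

theorem natDegree_dualPoly_le (ψ : (Fin L → R) →ₗ[R] R) : (dualPoly ψ).natDegree ≤ L :=
  natDegree_sum_le_of_forall_le _ _ fun n _ =>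
    (natDegree_C_mul_X_pow_le _ _).trans n.is_lt.le

theorem coeff_dualPoly (ψ : (Fin L → R) →ₗ[R] R) (n : Fin L) :
    (dualPoly ψ).coeff n = ψ (Pi.single n 1) := by
  simp [dualPoly, Fin.val_inj]

theorem eq_zero_of_dualPoly_eq_zero {ψ : (Fin L → R) →ₗ[R] R} (h : dualPoly ψ = 0) : ψ = 0 := by
  refine LinearMap.pi_ext fun n x => ?_
  rw [← mul_one x, ← smul_eq_mul, Pi.single_smul', map_smul, ← coeff_dualPoly, h]
  simp

theorem apply_eq_coeff_dualPoly_mul (ψ : (Fin L → R) →ₗ[R] R) (p : R[X]) (t : ℕ) :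
    ψ (fun n => if (n : ℕ) ≤ t then p.coeff (t - n) else 0) = (dualPoly ψ * p).coeff t := by
  rw [LinearMap.pi_apply_eq_sum_univ, dualPoly, sum_mul, finsetSum_coeff]
  refine sum_congr rfl fun n _ => ?_
  rw [mul_assoc, coeff_C_mul, coeff_X_pow_mul', smul_eq_mul, mul_comm]
  congr 2
  ext j
  simp [Pi.single_apply, eq_comm]

end DualPoly

theorem fracCoeffMap_prod_surjective [Fact q.Prime] {s N L₁ L₂ : ℕ}
    {k k' : Fin s → (ZMod q)[X]} (hk : ∀ i, L₁ + (k i).natDegree < N)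
    (hk' : ∀ i, L₂ + (k' i).natDegree < N)
    (hind : ∀ A B : (ZMod q)[X], (∀ i, A * k i + B * k' i = 0) → A = 0 ∧ B = 0) :
    Function.Surjective ((fracCoeffMap k N L₁).prod (fracCoeffMap k' N L₂)) := by
  rw [← LinearMap.dualMap_injective_iff, injective_iff_map_eq_zero]
  intro φ hφ
  set A := dualPoly (φ ∘ₗ LinearMap.inl _ _ _)
  set B := dualPoly (φ ∘ₗ LinearMap.inr _ _ _)
  have hcoeff (i : Fin s) (t : Fin N) : (A * k i + B * k' i).coeff t = 0 := by
    have hsplit (x : Fin L₁ → ZMod q) (y : Fin L₂ → ZMod q) :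
        φ (x, y) = (φ ∘ₗ LinearMap.inl _ _ _) x + (φ ∘ₗ LinearMap.inr _ _ _) y := by
      simp [← map_add]
    have := LinearMap.congr_fun hφ (Pi.single i (Pi.single t 1))
    rwa [LinearMap.dualMap_apply, LinearMap.prod_apply, Function.prod_apply, fracCoeffMap_single,
      fracCoeffMap_single, hsplit, apply_eq_coeff_dualPoly_mul, apply_eq_coeff_dualPoly_mul,
      ← coeff_add] at this
  have hzero (i : Fin s) : A * k i + B * k' i = 0 := by
    ext t
    rw [coeff_zero]
    by_cases ht : t < N
    · exact hcoeff i ⟨t, ht⟩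
    refine coeff_eq_zero_of_natDegree_lt ((natDegree_add_le _ _).trans_lt (max_lt ?_ ?_))
    · exact natDegree_mul_le.trans_lt
        (by linarith [natDegree_dualPoly_le (φ ∘ₗ LinearMap.inl _ _ _), hk i])
    · exact natDegree_mul_le.trans_lt
        (by linarith [natDegree_dualPoly_le (φ ∘ₗ LinearMap.inr _ _ _), hk' i])
  obtain ⟨hA, hB⟩ := hind A B hzero
  exact LinearMap.prod_ext (eq_zero_of_dualPoly_eq_zero hA) (eq_zero_of_dualPoly_eq_zero hB)

theorem GcdOne.exists_sum_mul_eq_one [Fact q.Prime] {s : ℕ} {k : Fin s → (ZMod q)[X]}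
    (hk : GcdOne k) : ∃ u : Fin s → (ZMod q)[X], ∑ i, u i * k i = 1 := by
  have htop : Ideal.span (Set.range k) = ⊤ := by
    rw [← Ideal.span_singleton_generator (Ideal.span (Set.range k)), Ideal.span_singleton_eq_top]
    exact hk _ fun i =>
      (Submodule.IsPrincipal.mem_iff_generator_dvd _).1 (Ideal.subset_span ⟨i, rfl⟩)
  exact Ideal.mem_span_range_iff_exists_fun.1 (htop ▸ Submodule.mem_top)

theorem GcdOne.eq_zero_of_forall_mul_add_mul_add_eq_zero [Fact q.Prime] {s : ℕ}
    {k β : Fin s → (ZMod q)[X]} (hk : GcdOne k) (hdeg : ∃ i, (k i).natDegree ≠ 0)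
    (hβ0 : ¬ ∀ i, β i = 0) (hβ : ∀ i, β i = 0 ∨ IsCoprime (β i) (k i)) {A B : (ZMod q)[X]}
    (h : ∀ i, A * k i + B * (k i + β i) = 0) : A = 0 ∧ B = 0 := by
  obtain ⟨i₀, hi₀⟩ := hdeg
  have hk₀ : k i₀ ≠ 0 := fun h0 => hi₀ (by rw [h0, natDegree_zero])
  by_cases hB : B = 0
  · subst hB
    simpa [hk₀] using h i₀
  obtain ⟨u, hu⟩ := hk.exists_sum_mul_eq_one
  set w := ∑ i, u i * β i
  have hAB : A + B = -(B * w) := by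
    calc A + B = (A + B) * ∑ i, u i * k i := by rw [hu, mul_one]
      _ = ∑ i, u i * (A * k i + B * (k i + β i)) - B * w := by
          simp only [w, mul_sum, ← sum_sub_distrib]
          exact sum_congr rfl fun i _ => by ring
      _ = -(B * w) := by simp [h]
  have hβk (i : Fin s) : β i = k i * w :=
    mul_left_cancel₀ hB (by linear_combination h i - k i * hAB)
  have hβ₀ : β i₀ = 0 := (hβ i₀).resolve_right fun hcop =>
    hi₀ (natDegree_eq_zero_of_isUnit (hcop.isUnit_of_dvd' ⟨w, hβk i₀⟩ dvd_rfl))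
  have hw : w = 0 := by simpa [hk₀, hβ₀] using (hβk i₀).symm
  exact absurd (fun i => by rw [hβk i, hw, mul_zero]) hβ0

theorem measure_intersection_indep_general (q : ℕ) (hq : q.Prime) (s : ℕ)
    (m : ℕ) (hm : 2 ≤ m)
    (k β : Fin s → Polynomial (ZMod q))
    (hdeg : ∑ i, (k i).natDegree = m)
    (hkgcd : GcdOne k)
    (hβ0 : ¬ ∀ i, β i = 0)
    (hβ : ∀ i, β i = 0 ∨ IsCoprime (β i) (k i)) :
    volume {f : Fin s → ℝ | (∀ i, f i ∈ Set.Ico (0:ℝ) 1) ∧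
        (∀ n : ℕ, n + 2 ≤ m → ∑ i, fracCoeff q (k i) (qDigit q (f i)) n = 0) ∧
        (∀ n : ℕ, n + 2 ≤ m / 2 →
          ∑ i, fracCoeff q (k i + β i) (qDigit q (f i)) n = 0)} =
      ((q : ENNReal) ^ (m - 1))⁻¹ * ((q : ENNReal) ^ (m / 2 - 1))⁻¹ := by
  have := Fact.mk hq
  set N := 2 * m + ∑ i, (k i + β i).natDegree
  set Φ := (fracCoeffMap k N (m - 1)).prod (fracCoeffMap (fun i => k i + β i) N (m / 2 - 1))
  have hk (i : Fin s) : m - 1 + (k i).natDegree < N := by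
    have := hdeg ▸ single_le_sum (f := fun j => (k j).natDegree) (by simp) (mem_univ i)
    omega
  have hkβ (i : Fin s) : m / 2 - 1 + (k i + β i).natDegree < N := by
    have := single_le_sum (f := fun j => (k j + β j).natDegree) (by simp) (mem_univ i)
    omega
  obtain ⟨i₀, -, hi₀⟩ := exists_ne_zero_of_sum_ne_zero (hdeg.trans_ne (by omega))
  have hsurj : Function.Surjective Φ := fracCoeffMap_prod_surjective hk hkβ fun A B =>
    hkgcd.eq_zero_of_forall_mul_add_mul_add_eq_zero ⟨i₀, hi₀⟩ hβ0 hβ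
  convert volume_setOf_apply_qDigits_eq_zero hsurj using 2
  · ext f
    refine and_congr_right fun _ => ?_
    rw [LinearMap.prod_apply, Function.prod_apply, Prod.mk_eq_zero]
    refine (and_congr
      ((fracCoeffMap_restrict_eq_zero_iff (fun i => qDigit q (f i)) fun i => (hk i).le).trans ?_)
      ((fracCoeffMap_restrict_eq_zero_iff (fun i => qDigit q (f i)) fun i => (hkβ i).le).trans
        ?_)).symm
    all_goals exact forall_congr' fun n => imp_congr_left (by omega)
  · simp only [Nat.card_prod, Nat.card_fun, Nat.card_zmod, Nat.card_fin, Nat.cast_mul, Nat.cast_pow]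
    exact (ENNReal.mul_inv (by simp [hq.ne_zero]) (by simp)).symm

/-- Independence of the two events in Lemma 3: for a tuple `(k_1,…,k_s)` of nonzero
polynomials with gcd `1`, `(k_1,…,k_s) ≠ (1,…,1)`, degrees summing to `m ≥ 2`, and
perturbations `β_j` (not all zero, each zero or coprime to `k_j`), the set of
`(f_1,…,f_s) ∈ Z̄^s` with `ν({∑ k_j f_j}) ≤ -m` and `ν({∑ (k_j+β_j) f_j}) ≤ -⌊m/2⌋`
has Haar measure `q^{-(m-1)} · q^{-(⌊m/2⌋-1)}`. -/
theorem measure_intersection_indep (q : ℕ) (hq : q.Prime) (s : ℕ) (hs : 1 ≤ s)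
    (m : ℕ) (hm : 2 ≤ m)
    (k β : Fin s → Polynomial (ZMod q))
    (hk0 : ∀ i, k i ≠ 0) (hdeg : ∑ i, (k i).natDegree = m)
    (hkgcd : GcdOne k) (hk1 : ¬ ∀ i, k i = 1)
    (hβ0 : ¬ ∀ i, β i = 0)
    (hβ : ∀ i, β i = 0 ∨ IsCoprime (β i) (k i)) :
    volume {f : Fin s → ℝ | (∀ i, f i ∈ Set.Ico (0:ℝ) 1) ∧
        (∀ n : ℕ, n + 2 ≤ m → ∑ i, fracCoeff q (k i) (qDigit q (f i)) n = 0) ∧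
        (∀ n : ℕ, n + 2 ≤ m / 2 →
          ∑ i, fracCoeff q (k i + β i) (qDigit q (f i)) n = 0)} =
      ((q : ENNReal) ^ (m - 1))⁻¹ * ((q : ENNReal) ^ (m / 2 - 1))⁻¹ :=
  measure_intersection_indep_general q hq s m hm k β hdeg hkgcd hβ0 hβ
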